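/- arXiv:1901.02073 — 5 statements merged into one kernel-verified Lean document; each statement's English description precedes it below -/
import Mathlib

section
/- Let F be a finite field and C ⊆ F[D]^n an (n,k,r,∂) locally repairable convolutional code with local groups Γ_1,...,Γ_g, admitting a reduced generator matrix G(D) = Σ_{h=0}^{μ} G_h D^h such that G_0 ∈ F^{k×n} has rank k. Assume further that: k = ℓr for a positive integer ℓ; the local groups are pairwise disjoint and each has size exactly r+∂−1; and there exist ℓ local groups Γ_{i_1},...,Γ_{i_ℓ} such that the projection of the row space of G_0 onto the coordinates in Γ_{i_1} ∪ ... ∪ Γ_{i_ℓ} is injective (i.e., these ℓ local groups contain an information set of the k-dimensional linear block code generated by G_0). Then for all j ∈ ℕ, the j-th column distance satisfies d_j^c(C) ≤ (n−k)(j+1) − (k(j+1)/r − 1)(∂−1) + 1. -/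
open Polynomial Matrix Finset

noncomputable section

namespace LRCC

variable {F : Type*} [Field F] {ι : Type*} [Fintype ι] {k : ℕ}

/-- Hamming weight of a vector: number of nonzero entries. -/
def hWt {α β : Type*} [Zero β] (v : α → β) : ℕ :=
  Nat.card {a // v a ≠ 0}

/-- `G` is a generator matrix of the convolutional code `C ⊆ F[D]^ι`:
its rows are `F[D]`-linearly independent (full rank) and they span `C`. -/
def IsGenMat (C : Submodule (Polynomial F) (ι → Polynomial F))
    (G : Matrix (Fin k) ι (Polynomial F)) : Prop :=
  LinearIndependent (Polynomial F) (fun i => G i) ∧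
    C = Submodule.span (Polynomial F) (Set.range fun i => G i)

/-- Degree of the `i`-th row of `G` (the maximum of the degrees of its entries). -/
def rowDeg (G : Matrix (Fin k) ι (Polynomial F)) (i : Fin k) : ℕ :=
  Finset.univ.sup fun j => (G i j).natDegree

/-- `G` is a reduced generator matrix of `C`: the sum of its row degrees is
minimum among all generator matrices of `C`. -/
def IsRedGenMat (C : Submodule (Polynomial F) (ι → Polynomial F))
    (G : Matrix (Fin k) ι (Polynomial F)) : Prop :=
  IsGenMat C G ∧ ∀ G' : Matrix (Fin k) ι (Polynomial F), IsGenMat C G' →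
    ∑ i, rowDeg G i ≤ ∑ i, rowDeg G' i

/-- `G` is a basic generator matrix of `C`: it has a polynomial right inverse. -/
def IsBasicGenMat (C : Submodule (Polynomial F) (ι → Polynomial F))
    (G : Matrix (Fin k) ι (Polynomial F)) : Prop :=
  IsGenMat C G ∧ ∃ Fi : Matrix ι (Fin k) (Polynomial F), G * Fi = 1

/-- `C` is non-catastrophic: it admits a reduced and basic generator matrix. -/
def NonCatastrophic (C : Submodule (Polynomial F) (ι → Polynomial F)) (k : ℕ) : Prop :=
  ∃ G : Matrix (Fin k) ι (Polynomial F), IsRedGenMat C G ∧ IsBasicGenMat C G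

/-- `C` is a convolutional code of rank `k` (a free submodule of rank `k`,
equivalently it admits a `k`-row generator matrix). -/
def IsConvCode (C : Submodule (Polynomial F) (ι → Polynomial F)) (k : ℕ) : Prop :=
  ∃ G : Matrix (Fin k) ι (Polynomial F), IsGenMat C G

/-- `h`-th coefficient matrix `G_h` of a polynomial matrix `G(D) = Σ_h G_h D^h`. -/
def coeffMat (G : Matrix (Fin k) ι (Polynomial F)) (h : ℕ) : Matrix (Fin k) ι F :=
  fun i j => (G i j).coeff h

/-- `j`-th truncated sliding generator matrix `G_j^c`. -/
def slidingMat (G : Matrix (Fin k) ι (Polynomial F)) (j : ℕ) :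
    Matrix (Fin (j + 1) × Fin k) (Fin (j + 1) × ι) F :=
  fun a b => if (a.1 : ℕ) ≤ (b.1 : ℕ) then (G a.2 b.2).coeff ((b.1 : ℕ) - (a.1 : ℕ)) else 0

/-- `j`-th column block code `C_j^c`. -/
def colBlockCode (G : Matrix (Fin k) ι (Polynomial F)) (j : ℕ) :
    Set (Fin (j + 1) × ι → F) :=
  { v | ∃ u : Fin (j + 1) × Fin k → F, (fun i => u (0, i)) ≠ 0 ∧
      v = Matrix.vecMul u (slidingMat G j) }

/-- `j`-th column (Hamming) distance. -/
def colDist (G : Matrix (Fin k) ι (Polynomial F)) (j : ℕ) : ℕ :=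
  sInf (hWt '' colBlockCode G j)

/-- Restriction of a convolutional code to a subset `Δ` of its coordinates. -/
def restrictCode (C : Submodule (Polynomial F) (ι → Polynomial F)) (Δ : Finset ι) :
    Submodule (Polynomial F) ({x // x ∈ Δ} → Polynomial F) :=
  C.map (LinearMap.funLeft (Polynomial F) (Polynomial F) Subtype.val)

/-- Associated block code `C^0` of a convolutional code `C`
(the set of `j`-th coefficient vectors of codewords, for `j` large enough;
this union over all `j` equals `{v_μ : v(D) ∈ C}` for `μ` the memory of the code). -/
def assocBlockCode (C : Submodule (Polynomial F) (ι → Polynomial F)) : Set (ι → F) :=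
  { w | ∃ v ∈ C, ∃ j : ℕ, ∀ i, w i = (v i).coeff j }

/-- `C` is an `(n, k, r, ∂)` locally repairable convolutional code with local
groups `Γ 1, ..., Γ g` covering all coordinates. -/
def IsLRCC (C : Submodule (Polynomial F) (ι → Polynomial F)) (k r d : ℕ)
    {g : ℕ} (Γ : Fin g → Finset ι) : Prop :=
  IsConvCode C k ∧
  (∀ x : ι, ∃ a, x ∈ Γ a) ∧
  (∀ a, (Γ a).card ≤ r + d - 1) ∧
  (∀ a, ∀ w ∈ assocBlockCode (restrictCode C (Γ a)), w ≠ 0 → d ≤ hWt w)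

/-- `C` is `j`-MDS: non-catastrophic with `j`-th column distance `(n−k)(j+1)+1`. -/
def IsjMDS (C : Submodule (Polynomial F) (ι → Polynomial F)) (k j : ℕ) : Prop :=
  NonCatastrophic C k ∧
  ∀ G : Matrix (Fin k) ι (Polynomial F), IsRedGenMat C G →
    colDist G j = (Fintype.card ι - k) * (j + 1) + 1

/-- `C` is partial `j`-MDS with respect to local groups `Γ`. -/
def IsPartialjMDS [DecidableEq ι] (C : Submodule (Polynomial F) (ι → Polynomial F))
    (k r d : ℕ) {g : ℕ} (Γ : Fin g → Finset ι) (j : ℕ) : Prop :=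
  ∀ Δ : Fin g → Finset ι, (∀ a, Δ a ⊆ Γ a) → (∀ a, (Γ a \ Δ a).card = d - 1) →
    IsjMDS (restrictCode C (Finset.univ.biUnion Δ)) k j

section SumRank

variable (Fq : Type*) [Field Fq] {Fqm : Type*} [Field Fqm] [Algebra Fq Fqm]

/-- Sum-rank weight of `c ∈ F_{q^m}^{gr}` (with respect to a basis `B` of
`F_{q^m}` over `F_q`): the sum over the `g` blocks of the ranks of the
matrix representations of the blocks. -/
def srWt {m g r : ℕ} (B : Module.Basis (Fin m) Fq Fqm) (c : Fin g × Fin r → Fqm) : ℕ :=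
  ∑ a : Fin g, (Matrix.of fun (i : Fin m) (j : Fin r) => B.repr (c (a, j)) i).rank

/-- Sum-rank weight of a window vector in `F_{q^m}^{(j+1)gr}`. -/
def srWtVec {m g r : ℕ} (B : Module.Basis (Fin m) Fq Fqm) {j : ℕ}
    (v : Fin (j + 1) × (Fin g × Fin r) → Fqm) : ℕ :=
  ∑ h : Fin (j + 1), srWt Fq B fun p => v (h, p)

/-- `j`-th sum-rank column distance. -/
def srColDist {m g r k : ℕ} (B : Module.Basis (Fin m) Fq Fqm)
    (G : Matrix (Fin k) (Fin g × Fin r) (Polynomial Fqm)) (j : ℕ) : ℕ :=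
  sInf (srWtVec Fq B '' colBlockCode G j)

/-- `C` is `j`-MSRD. -/
def IsjMSRD {m g r : ℕ} (B : Module.Basis (Fin m) Fq Fqm)
    (C : Submodule (Polynomial Fqm) (Fin g × Fin r → Polynomial Fqm)) (k j : ℕ) : Prop :=
  NonCatastrophic C k ∧
  ∀ G : Matrix (Fin k) (Fin g × Fin r) (Polynomial Fqm), IsRedGenMat C G →
    srColDist Fq B G j = (g * r - k) * (j + 1) + 1

/-- The block-diagonal matrix `diag_g(A)`, with `g` diagonal copies of `A`,
viewed over the polynomial ring `F_{q^m}[D]`. -/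
def diagMap (g : ℕ) {r s : ℕ} (A : Matrix (Fin r) (Fin s) Fq) :
    Matrix (Fin g × Fin r) (Fin g × Fin s) (Polynomial Fqm) :=
  fun p q => if p.1 = q.1 then Polynomial.C (algebraMap Fq Fqm (A p.2 q.2)) else 0

/-- The global code of Construction 1: `C_glob = { v(D) diag_g(A) : v(D) ∈ C_out }`. -/
def globCode {g r s : ℕ}
    (Cout : Submodule (Polynomial Fqm) (Fin g × Fin r → Polynomial Fqm))
    (A : Matrix (Fin r) (Fin s) Fq) :
    Submodule (Polynomial Fqm) (Fin g × Fin s → Polynomial Fqm) :=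
  Cout.map (Matrix.vecMulLinear (diagMap (Fqm := Fqm) Fq g A))

end SumRank

/-! Pick `r` coordinates `Δ t` inside each of the `ℓ` information local groups; their union `S`
has `k` elements. A codeword whose coefficient vanishes on `Δ t` vanishes on the whole local group,
since fewer than `d` coordinates remain there; together with the information-set hypothesis this
makes `u ↦ (u G₀)|_S` injective. The sliding matrix restricted to the columns over `S` is then
block triangular with invertible diagonal blocks, so some window of a codeword equals the unit
vector at `(0, x₀)` on `S`. By locality once more, this window vanishes on every chosen local group
at every time, except on `(Γ \ Δ) ∪ {x₀}` of one group at time `0`; counting these zeros gives the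
bound. -/

open Function

theorem hWt_le_card_of_forall_ne_zero_mem {α β γ : Type*} [Zero β] (v : α → β) (f : α ↪ γ)
    (s : Finset γ) (h : ∀ a, v a ≠ 0 → f a ∈ s) : hWt v ≤ #s :=
  calc hWt v ≤ Nat.card s :=
        Nat.card_le_card_of_injective (fun a => ⟨f a.1, h a.1 a.2⟩)
          fun _ _ hab => Subtype.ext (f.injective (congrArg Subtype.val hab))
    _ = #s := Nat.card_eq_finsetCard s

theorem _root_.Matrix.vecMul_injective_of_rank_eq {m n R : Type*} [Fintype m] [Fintype n]
    [Field R] {A : Matrix m n R} (h : A.rank = Fintype.card m) :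
    Injective fun v => v ᵥ* A :=
  vecMul_injective_iff.mpr <| linearIndependent_iff_card_eq_finrank_span.mpr <| by
    rw [← h, A.rank_eq_finrank_span_row, Set.finrank]

theorem IsGenMat.vecMul_mem {α : Type*} {C : Submodule F[X] (α → F[X])}
    {G : Matrix (Fin k) α F[X]} (hG : IsGenMat C G) (p : Fin k → F[X]) : p ᵥ* G ∈ C := by
  rw [hG.2, vecMul_eq_sum]
  exact Submodule.sum_mem _ fun i _ => Submodule.smul_mem _ _ (Submodule.subset_span ⟨i, rfl⟩)

theorem coeff_eq_zero_of_mem_of_local {α : Type*} [DecidableEq α]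
    {C : Submodule F[X] (α → F[X])} {Γ Δ : Finset α} {d : ℕ}
    (hloc : ∀ w ∈ assocBlockCode (restrictCode C Γ), w ≠ 0 → d ≤ hWt w)
    (hΔ : #(Γ \ Δ) < d) {c : α → F[X]} (hc : c ∈ C) {h : ℕ}
    (h0 : ∀ x ∈ Δ, (c x).coeff h = 0) : ∀ x ∈ Γ, (c x).coeff h = 0 := by
  set w : Γ → F := fun x => (c x).coeff h
  have hw : w ∈ assocBlockCode (restrictCode C Γ) :=
    ⟨fun x => c x, ⟨c, hc, rfl⟩, h, fun _ => rfl⟩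
  have hwt : hWt w ≤ #(Γ \ Δ) :=
    hWt_le_card_of_forall_ne_zero_mem w (Function.Embedding.subtype _) _ fun x hx =>
      mem_sdiff.mpr ⟨x.2, fun hxΔ => hx (h0 x hxΔ)⟩
  by_contra! hne
  obtain ⟨x, hxΓ, hx⟩ := hne
  exact absurd (hloc w hw fun hw0 => hx (congrFun hw0 ⟨x, hxΓ⟩)) (by omega)

theorem coeff_zero_vecMul_C {α : Type*} (G : Matrix (Fin k) α F[X]) (u : Fin k → F) (x : α) :
    (((fun i => C (u i)) ᵥ* G) x).coeff 0 = (u ᵥ* coeffMat G 0) x := by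
  simp [vecMul, dotProduct, coeffMat]

theorem exists_coeff_vecMul_eq_vecMul_slidingMat {α : Type*} (G : Matrix (Fin k) α F[X]) (j : ℕ)
    (U : Fin (j + 1) × Fin k → F) :
    ∃ p : Fin k → F[X], ∀ (a : Fin (j + 1)) (x : α),
      ((p ᵥ* G) x).coeff a = (U ᵥ* slidingMat G j) (a, x) := by
  refine ⟨fun i => ∑ τ : Fin (j + 1), C (U (τ, i)) * X ^ (τ : ℕ), fun a x => ?_⟩
  simp only [vecMul, dotProduct, finsetSum_coeff, Finset.sum_mul, Fintype.sum_prod_type,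
    slidingMat]
  rw [Finset.sum_comm]
  refine sum_congr rfl fun i _ => sum_congr rfl fun τ _ => ?_
  rw [mul_right_comm, coeff_mul_X_pow', coeff_C_mul]
  split_ifs <;> simp

theorem vecMul_slidingMat_apply_of_forall_lt {α : Type*} (G : Matrix (Fin k) α F[X]) {j : ℕ}
    {U : Fin (j + 1) × Fin k → F} {a : Fin (j + 1)} (hU : ∀ τ < a, ∀ i, U (τ, i) = 0) (x : α) :
    (U ᵥ* slidingMat G j) (a, x) = ((fun i => U (a, i)) ᵥ* coeffMat G 0) x := by
  simp only [vecMul, dotProduct, Fintype.sum_prod_type]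
  rw [Finset.sum_eq_single a]
  · simp [slidingMat, coeffMat]
  · intro τ _ hτ
    rcases lt_or_gt_of_ne hτ with hlt | hgt
    · simp [hU τ hlt]
    · simp [slidingMat, not_le.mpr hgt]
  · simp

theorem eq_zero_of_vecMul_slidingMat_eq_zero {α : Type*} {G : Matrix (Fin k) α F[X]}
    {S : Finset α} (hG0 : ∀ u : Fin k → F, (∀ x ∈ S, (u ᵥ* coeffMat G 0) x = 0) → u = 0)
    {j : ℕ} {U : Fin (j + 1) × Fin k → F}
    (hU : ∀ a, ∀ x ∈ S, (U ᵥ* slidingMat G j) (a, x) = 0) : U = 0 := by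
  suffices h : ∀ a i, U (a, i) = 0 from funext fun p => h p.1 p.2
  intro a
  induction a using WellFoundedLT.induction with
  | _ a ih =>
    refine congrFun (hG0 (fun i => U (a, i)) fun x hx => ?_)
    rw [← vecMul_slidingMat_apply_of_forall_lt G ih]
    exact hU a x hx

theorem exists_vecMul_slidingMat_eq {α : Type*} {G : Matrix (Fin k) α F[X]} {S : Finset α}
    (hS : #S = k) (hG0 : ∀ u : Fin k → F, (∀ x ∈ S, (u ᵥ* coeffMat G 0) x = 0) → u = 0)
    (j : ℕ) (w : Fin (j + 1) × S → F) :
    ∃ U : Fin (j + 1) × Fin k → F, ∀ a (x : S), (U ᵥ* slidingMat G j) (a, x) = w (a, x) := by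
  let f := LinearMap.funLeft F F (fun p : Fin (j + 1) × S => (p.1, (p.2 : α))) ∘ₗ
    vecMulLinear (slidingMat G j)
  have hinj : Injective f := by
    rw [← LinearMap.ker_eq_bot, LinearMap.ker_eq_bot']
    exact fun U hU => eq_zero_of_vecMul_slidingMat_eq_zero hG0 fun a x hx =>
      congrFun hU (a, ⟨x, hx⟩)
  have hdim : Module.finrank F (Fin (j + 1) × Fin k → F) =
      Module.finrank F (Fin (j + 1) × S → F) := by
    simp [hS]
  obtain ⟨U, hU⟩ := (LinearMap.injective_iff_surjective_of_finrank_eq_finrank hdim).mp hinj w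
  exact ⟨U, fun a x => congrFun hU (a, x)⟩

theorem vecMul_coeffMat_zero_eq_zero_of_local [DecidableEq ι] {C : Submodule F[X] (ι → F[X])}
    {G : Matrix (Fin k) ι F[X]} (hG : IsGenMat C G) (hrank : (coeffMat G 0).rank = k)
    {ℓ d : ℕ} {Γ Δ : Fin ℓ → Finset ι}
    (hloc : ∀ t, ∀ w ∈ assocBlockCode (restrictCode C (Γ t)), w ≠ 0 → d ≤ hWt w)
    (hΔ : ∀ t, #(Γ t \ Δ t) < d)
    (hinfo : ∀ u : Fin k → F, (∀ x, (∃ t, x ∈ Γ t) → (u ᵥ* coeffMat G 0) x = 0) →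
      u ᵥ* coeffMat G 0 = 0)
    (u : Fin k → F) (hu : ∀ x ∈ univ.biUnion Δ, (u ᵥ* coeffMat G 0) x = 0) : u = 0 := by
  refine Matrix.vecMul_injective_of_rank_eq (A := coeffMat G 0) (by simpa using hrank) ?_
  simp only [zero_vecMul]
  refine hinfo u fun x ⟨t, hx⟩ => ?_
  rw [← coeff_zero_vecMul_C]
  refine coeff_eq_zero_of_mem_of_local (hloc t) (hΔ t) (hG.vecMul_mem _) (fun y hy => ?_) x hx
  rw [coeff_zero_vecMul_C]
  exact hu y (mem_biUnion.mpr ⟨t, mem_univ _, hy⟩)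

theorem exists_mem_colBlockCode_coeff_eq_single {α : Type*} [DecidableEq α]
    {C : Submodule F[X] (α → F[X])} {G : Matrix (Fin k) α F[X]} (hG : IsGenMat C G)
    {S : Finset α} (hS : #S = k)
    (hG0 : ∀ u : Fin k → F, (∀ x ∈ S, (u ᵥ* coeffMat G 0) x = 0) → u = 0)
    {x₀ : α} (hx₀ : x₀ ∈ S) (j : ℕ) :
    ∃ c ∈ C, (fun q : Fin (j + 1) × α => (c q.2).coeff q.1) ∈ colBlockCode G j ∧
      ∀ a ≤ j, ∀ x ∈ S, (c x).coeff a = if a = 0 ∧ x = x₀ then 1 else 0 := by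
  obtain ⟨U, hU⟩ := exists_vecMul_slidingMat_eq hS hG0 j
    fun q => if (q.1 : ℕ) = 0 ∧ (q.2 : α) = x₀ then 1 else 0
  obtain ⟨p, hp⟩ := exists_coeff_vecMul_eq_vecMul_slidingMat G j U
  have hU₀ : (fun i => U (0, i)) ≠ 0 := by
    intro h
    have h₁ := hU 0 ⟨x₀, hx₀⟩
    rw [vecMul_slidingMat_apply_of_forall_lt G (fun τ hτ => absurd hτ (Fin.not_lt_zero τ)), h,
      zero_vecMul] at h₁
    simp at h₁
  refine ⟨p ᵥ* G, hG.vecMul_mem p, ⟨U, hU₀, funext fun q => hp q.1 q.2⟩, fun a ha x hx => ?_⟩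
  simpa using (hp ⟨a, Nat.lt_succ_of_le ha⟩ x).trans (hU ⟨a, Nat.lt_succ_of_le ha⟩ ⟨x, hx⟩)

theorem hWt_coeff_le_of_local [DecidableEq ι] {C : Submodule F[X] (ι → F[X])} {ℓ d j : ℕ}
    {Γ Δ : Fin ℓ → Finset ι} (hΓ : Pairwise (Disjoint on Γ)) (hΔΓ : ∀ t, Δ t ⊆ Γ t)
    (hloc : ∀ t, ∀ w ∈ assocBlockCode (restrictCode C (Γ t)), w ≠ 0 → d ≤ hWt w)
    (hΔ : ∀ t, #(Γ t \ Δ t) < d) {c : ι → F[X]} (hc : c ∈ C) {t₀ : Fin ℓ} {x₀ : ι}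
    (hx₀ : x₀ ∈ Δ t₀)
    (hcΔ : ∀ a ≤ j, ∀ t, ∀ x ∈ Δ t, (c x).coeff a = if a = 0 ∧ x = x₀ then 1 else 0) :
    hWt (fun q : Fin (j + 1) × ι => (c q.2).coeff q.1) ≤
      (j + 1) * (Fintype.card ι - #(univ.biUnion Γ)) + d := by
  set T := univ.biUnion Γ
  set B := insert x₀ (Γ t₀ \ Δ t₀)
  have hsupp : ∀ a ≤ j, ∀ x, (c x).coeff a ≠ 0 → x ∉ T ∨ (a = 0 ∧ x ∈ B) := by
    intro a ha x hx
    refine or_iff_not_imp_left.mpr fun hxT => ?_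
    obtain ⟨t, -, hxt⟩ := mem_biUnion.mp (not_not.mp hxT)
    by_cases hxΔ : x ∈ Δ t
    · rw [hcΔ a ha t x hxΔ] at hx
      obtain ⟨ha0, rfl⟩ := (ite_ne_right_iff.mp hx).1
      exact ⟨ha0, mem_insert_self _ _⟩
    by_cases hat : a = 0 ∧ t = t₀
    · obtain ⟨ha0, rfl⟩ := hat
      exact ⟨ha0, mem_insert_of_mem (mem_sdiff.mpr ⟨hxt, hxΔ⟩)⟩
    -- away from `(0, x₀)` the coefficient vanishes on all of `Δ t`, hence on `Γ t` by locality
    refine absurd (coeff_eq_zero_of_mem_of_local (hloc t) (hΔ t) hc (fun y hy => ?_) x hxt) hx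
    rw [hcΔ a ha t y hy, if_neg]
    rintro ⟨ha0, rfl⟩
    exact hat ⟨ha0, hΓ.eq (not_disjoint_iff.mpr ⟨y, hΔΓ t hy, hΔΓ t₀ hx₀⟩)⟩
  calc hWt (fun q : Fin (j + 1) × ι => (c q.2).coeff q.1)
      ≤ #((univ : Finset (Fin (j + 1))) ×ˢ Tᶜ ∪ {0} ×ˢ B) := by
        refine hWt_le_card_of_forall_ne_zero_mem _ (Function.Embedding.refl _) _ fun q hq => ?_
        rcases hsupp q.1 (Nat.lt_succ_iff.mp q.1.2) q.2 hq with hT | ⟨h0, hB⟩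
        · exact mem_union_left _ (mem_product.mpr ⟨mem_univ _, mem_compl.mpr hT⟩)
        · exact mem_union_right _ (mem_product.mpr ⟨mem_singleton.mpr (Fin.ext h0), hB⟩)
    _ ≤ #((univ : Finset (Fin (j + 1))) ×ˢ Tᶜ) + #({0} ×ˢ B) := card_union_le _ _
    _ ≤ (j + 1) * (Fintype.card ι - #T) + d := by
        have hB : #B ≤ #(Γ t₀ \ Δ t₀) + 1 := card_insert_le _ _
        simp only [card_product, card_univ, Fintype.card_fin, card_compl, card_singleton,
          one_mul]
        have := hΔ t₀
        omega

theorem statement1_general {F : Type*} [Field F]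
    {n k r d g ℓ : ℕ} (hr : 0 < r) (hd : 0 < d) (hℓ : 0 < ℓ)
    (hkl : k = ℓ * r)
    (C : Submodule (Polynomial F) (Fin n → Polynomial F))
    (Γ : Fin g → Finset (Fin n)) (hC : IsLRCC C k r d Γ)
    (hdisj : ∀ a b, a ≠ b → Disjoint (Γ a) (Γ b))
    (hfull : ∀ a, (Γ a).card = r + d - 1)
    (G : Matrix (Fin k) (Fin n) (Polynomial F)) (hG : IsRedGenMat C G)
    (hG0 : (coeffMat G 0).rank = k)
    (hinfo : ∃ e : Fin ℓ → Fin g, Function.Injective e ∧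
      ∀ u : Fin k → F,
        (∀ x : Fin n, (∃ t, x ∈ Γ (e t)) → Matrix.vecMul u (coeffMat G 0) x = 0) →
        Matrix.vecMul u (coeffMat G 0) = 0) :
    ∀ j : ℕ, (colDist G j : ℤ) ≤
      ((n : ℤ) - k) * (j + 1) - ((ℓ : ℤ) * (j + 1) - 1) * ((d : ℤ) - 1) + 1 := by
  intro j
  obtain ⟨e, he, hinfo⟩ := hinfo
  have hloc t := hC.2.2.2 (e t)
  choose Δ hΔΓ hΔcard using fun t =>
    exists_subset_card_eq (hfull (e t) ▸ (by omega : r ≤ r + d - 1))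
  have hΓ : Pairwise (Disjoint on fun t => Γ (e t)) := fun t t' h => hdisj _ _ (he.ne h)
  have hΔ : Pairwise (Disjoint on Δ) := fun t t' h => (hΓ h).mono (hΔΓ t) (hΔΓ t')
  have hdiff t : #(Γ (e t) \ Δ t) < d := by
    rw [card_sdiff_of_subset (hΔΓ t), hfull, hΔcard]; omega
  have hS : #(univ.biUnion Δ) = k := by
    simp [card_biUnion (hΔ.set_pairwise _), hΔcard, hkl]
  have hT : #(univ.biUnion fun t => Γ (e t)) = ℓ * (r + d - 1) := by
    simp [card_biUnion (hΓ.set_pairwise _), hfull]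
  obtain ⟨x₀, hx₀⟩ : (Δ ⟨0, hℓ⟩).Nonempty := card_pos.mp (hΔcard _ ▸ hr)
  obtain ⟨c, hc, hcode, hcS⟩ := exists_mem_colBlockCode_coeff_eq_single hG.1 hS
    (vecMul_coeffMat_zero_eq_zero_of_local hG.1 hG0 hloc hdiff hinfo)
    (mem_biUnion.mpr ⟨_, mem_univ _, hx₀⟩) j
  have hwt := hWt_coeff_le_of_local hΓ hΔΓ hloc hdiff hc hx₀ fun a ha t x hx =>
    hcS a ha x (mem_biUnion.mpr ⟨t, mem_univ _, hx⟩)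
  have hdist : colDist G j ≤ (j + 1) * (n - ℓ * (r + d - 1)) + d := by
    rw [Fintype.card_fin, hT] at hwt
    exact (Nat.sInf_le (Set.mem_image_of_mem hWt hcode)).trans hwt
  have hTn : ℓ * (r + d - 1) ≤ n := hT ▸ (card_le_univ _).trans_eq (Fintype.card_fin n)
  zify [hTn, (by omega : 1 ≤ r + d), hd] at hdist
  subst hkl
  push_cast
  linarith

theorem statement1 {F : Type*} [Field F] [Fintype F]
    {n k r d g ℓ : ℕ} (hk : 0 < k) (hr : 0 < r) (hd : 0 < d) (hℓ : 0 < ℓ)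
    (hkl : k = ℓ * r)
    (C : Submodule (Polynomial F) (Fin n → Polynomial F))
    (Γ : Fin g → Finset (Fin n)) (hC : IsLRCC C k r d Γ)
    (hdisj : ∀ a b, a ≠ b → Disjoint (Γ a) (Γ b))
    (hfull : ∀ a, (Γ a).card = r + d - 1)
    (G : Matrix (Fin k) (Fin n) (Polynomial F)) (hG : IsRedGenMat C G)
    (hG0 : (coeffMat G 0).rank = k)
    (hinfo : ∃ e : Fin ℓ → Fin g, Function.Injective e ∧
      ∀ u : Fin k → F,
        (∀ x : Fin n, (∃ t, x ∈ Γ (e t)) → Matrix.vecMul u (coeffMat G 0) x = 0) →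
        Matrix.vecMul u (coeffMat G 0) = 0) :
    ∀ j : ℕ, (colDist G j : ℤ) ≤
      ((n : ℤ) - k) * (j + 1) - ((ℓ : ℤ) * (j + 1) - 1) * ((d : ℤ) - 1) + 1 :=
  statement1_general hr hd hℓ hkl C Γ hC hdisj hfull G hG hG0 hinfo

end LRCC
end
end

section
/- Let F be a finite field and C ⊆ F[D]^n a non-catastrophic (n,k) convolutional code with k ≤ n. Then there exists a full-rank matrix H(D) ∈ F[D]^{(n−k)×n} such that C = {v(D) ∈ F[D]^n : v(D)H(D)^T = 0}. -/
open Polynomial Matrix Finset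

noncomputable section

namespace LRCC

variable {F : Type*} [Field F] {ι : Type*} [Fintype ι] {k : ℕ}

/-!
If the generator matrix `G` has a polynomial right inverse `Fi`, then `v` is a codeword exactly
when `v (1 - Fi G) = 0`. So the code is the left kernel of any matrix whose columns span the same
module `N` as the columns of `1 - Fi G`. Over the PID `F[D]` the submodule `N` of
`F[D]^n` is free, and by rank–nullity (the kernel of `1 - Fi G` is the image of `Fi`, of rank `k`)
it has rank `n - k`; a basis of `N` gives the rows of `H`.
-/

section CommRing

variable {R : Type*} [CommRing R] {κ : Type*}

theorem vecMul_eq_zero_iff_forall_mem_range_mulVecLin [Fintype κ] (M : Matrix ι κ R)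
    (v : ι → R) : v ᵥ* M = 0 ↔ ∀ x ∈ LinearMap.range M.mulVecLin, v ⬝ᵥ x = 0 := by
  classical
  constructor
  · rintro h _ ⟨y, rfl⟩
    rw [mulVecLin_apply, dotProduct_mulVec, h, zero_dotProduct]
  · intro h
    funext j
    have := h _ ⟨Pi.single j 1, rfl⟩
    rwa [mulVecLin_apply, dotProduct_mulVec, dotProduct_single, mul_one] at this

theorem vecMul_eq_zero_iff_of_span_col_eq [Fintype κ] {κ' : Type*} [Fintype κ'] {M : Matrix ι κ R} {M' : Matrix ι κ' R}
    (h : Submodule.span R (Set.range M.col) = Submodule.span R (Set.range M'.col)) (v : ι → R) :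
    v ᵥ* M = 0 ↔ v ᵥ* M' = 0 := by
  rw [vecMul_eq_zero_iff_forall_mem_range_mulVecLin, vecMul_eq_zero_iff_forall_mem_range_mulVecLin,
    range_mulVecLin, range_mulVecLin, h]

variable {G : Matrix (Fin k) ι R} {Fi : Matrix ι (Fin k) R}

theorem mem_range_vecMulLinear_iff_vecMul_one_sub_eq_zero [DecidableEq ι] (hGFi : G * Fi = 1)
    (v : ι → R) : v ∈ LinearMap.range G.vecMulLinear ↔ v ᵥ* (1 - Fi * G) = 0 := by
  rw [vecMul_sub, vecMul_one, sub_eq_zero]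
  constructor
  · rintro ⟨u, rfl⟩
    rw [vecMulLinear_apply, vecMul_vecMul, ← Matrix.mul_assoc, hGFi, Matrix.one_mul]
  · intro h
    exact ⟨v ᵥ* Fi, by rw [vecMulLinear_apply, vecMul_vecMul]; exact h.symm⟩

theorem ker_mulVecLin_one_sub [DecidableEq ι] (hGFi : G * Fi = 1) :
    LinearMap.ker (1 - Fi * G).mulVecLin = LinearMap.range Fi.mulVecLin := by
  ext x
  simp only [LinearMap.mem_ker, LinearMap.mem_range, mulVecLin_apply, sub_mulVec, one_mulVec,
    sub_eq_zero]
  constructor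
  · intro h
    exact ⟨G *ᵥ x, by rw [mulVec_mulVec]; exact h.symm⟩
  · rintro ⟨y, rfl⟩
    rw [mulVec_mulVec, Matrix.mul_assoc, hGFi, Matrix.mul_one]

theorem mulVec_injective_of_mul_eq_one (hGFi : G * Fi = 1) : Function.Injective Fi.mulVec :=
  Function.LeftInverse.injective (g := G.mulVec) fun x => by rw [mulVec_mulVec, hGFi, one_mulVec]

end CommRing

section PID

variable {R : Type*} [CommRing R] [IsDomain R] [IsPrincipalIdealRing R]
  {G : Matrix (Fin k) ι R} {Fi : Matrix ι (Fin k) R}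

theorem finrank_range_mulVecLin_one_sub [DecidableEq ι] (hGFi : G * Fi = 1) :
    Module.finrank R (LinearMap.range (1 - Fi * G).mulVecLin) = Fintype.card ι - k := by
  have h := LinearMap.rank_range_add_rank_ker (1 - Fi * G).mulVecLin
  rw [← Module.finrank_eq_rank, ← Module.finrank_eq_rank, ← Module.finrank_eq_rank] at h
  norm_cast at h
  rw [ker_mulVecLin_one_sub hGFi, LinearMap.finrank_range_of_inj (f := Fi.mulVecLin)
    (mulVec_injective_of_mul_eq_one hGFi), Module.finrank_fin_fun,
    Module.finrank_fintype_fun_eq_card] at h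
  omega

theorem exists_linearIndependent_vecMul_transpose_eq_zero_iff (hGFi : G * Fi = 1) :
    ∃ H : Matrix (Fin (Fintype.card ι - k)) ι R, LinearIndependent R (fun a => H a) ∧
      ∀ v, v ∈ LinearMap.range G.vecMulLinear ↔ v ᵥ* Hᵀ = 0 := by
  classical
  set N := LinearMap.range (1 - Fi * G).mulVecLin
  let b := Module.finBasisOfFinrankEq R N (finrank_range_mulVecLin_one_sub hGFi)
  have hspan : Submodule.span R (Set.range fun a => (b a : ι → R)) = N := by
    rw [Set.range_comp', Submodule.span_val_image_eq_iff, b.span_eq]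
  refine ⟨Matrix.of fun a => (b a : ι → R), b.linearIndependent.map' N.subtype N.ker_subtype,
    fun v => ?_⟩
  rw [mem_range_vecMulLinear_iff_vecMul_one_sub_eq_zero hGFi]
  refine vecMul_eq_zero_iff_of_span_col_eq ?_ v
  rw [← range_mulVecLin, col_transpose]
  exact hspan.symm

end PID

theorem statement2_general {F : Type*} [Field F] {n k : ℕ}
    (C : Submodule (Polynomial F) (Fin n → Polynomial F))
    (hnc : NonCatastrophic C k) :
    ∃ H : Matrix (Fin (n - k)) (Fin n) (Polynomial F),
      LinearIndependent (Polynomial F) (fun a => H a) ∧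
      ∀ v : Fin n → Polynomial F, v ∈ C ↔ Matrix.vecMul v Hᵀ = 0 := by
  obtain ⟨G, -, ⟨-, rfl⟩, Fi, hGFi⟩ := hnc
  have h := exists_linearIndependent_vecMul_transpose_eq_zero_iff hGFi
  rw [Fintype.card_fin, range_vecMulLinear] at h
  exact h

theorem statement2 {F : Type*} [Field F] [Fintype F] {n k : ℕ} (hk : k ≤ n)
    (C : Submodule (Polynomial F) (Fin n → Polynomial F))
    (hnc : NonCatastrophic C k) :
    ∃ H : Matrix (Fin (n - k)) (Fin n) (Polynomial F),
      LinearIndependent (Polynomial F) (fun a => H a) ∧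
      ∀ v : Fin n → Polynomial F, v ∈ C ↔ Matrix.vecMul v Hᵀ = 0 :=
  statement2_general C hnc

end LRCC
end
end

section
/- Let q be a prime power, m, g, r positive integers, N = gr, and let C ⊆ F_{q^m}[D]^N be a non-catastrophic (N,k) convolutional code of degree δ with 1 ≤ k < N. Then for all j ∈ ℕ, the j-th sum-rank column distance satisfies d_{SR,j}^c(C) ≤ (N−k)(j+1) + 1. Moreover: (1) if d_{SR,j+1}^c(C) = (N−k)(j+2) + 1, then d_{SR,j}^c(C) = (N−k)(j+1) + 1; and (2) if d_{SR,j}^c(C) = (N−k)(j+1) + 1, then j ≤ ⌊δ/k⌋ + ⌊δ/(N−k)⌋. -/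
open Polynomial Matrix Finset

noncomputable section

namespace LRCC

variable {F : Type*} [Field F] {ι : Type*} [Fintype ι] {k : ℕ}

/-!
Since `C` is non-catastrophic, the constant coefficient `G₀` of every generator matrix has a right
inverse, hence an information set `s` of `k` coordinates. Sum-rank weight is bounded by Hamming
weight, so it suffices to exhibit codewords with few nonzero coordinates. A codeword of the `j`-th
window extends to the next window by choosing the new input so that the new block vanishes on `s`;
this gives `d_{j+1} ≤ d_j + (N - k)`, which with `d_0 ≤ N - k + 1` yields the bound and (1).
For (2), combine the `ℓ` rows of minimal degree `ν`: the codeword vanishes after time `ν` and can be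
made to vanish on `ℓ - 1` coordinates, so `(N - k)(j + 1) + ℓ ≤ (ν + 1) N`, while
`k (ν + 1) ≤ δ + ℓ`.
-/

theorem exists_eq_mul_of_row_mem_span {R : Type*} [CommRing R] {m m' n : Type*} [Fintype m']
    (A : Matrix m n R) (A' : Matrix m' n R)
    (h : ∀ i, A i ∈ Submodule.span R (Set.range A'.row)) :
    ∃ P : Matrix m m' R, A = P * A' := by
  choose P hP using fun i => (Submodule.mem_span_range_iff_exists_fun R).1 (h i)
  refine ⟨Matrix.of P, funext fun i => ?_⟩
  rw [mul_apply_eq_vecMul, vecMul_eq_sum, ← hP]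
  rfl

section FieldMatrix

variable {K : Type*} [Field K] {m n : Type*} [Fintype m]

def IsInfoSet (A : Matrix m n K) (s : Finset n) : Prop :=
  ∀ w : n → K, ∃ x : m → K, ∀ p ∈ s, (x ᵥ* A) p = w p

theorem isInfoSet_of_linearIndependent_col (A : Matrix m n K) (s : Finset n)
    (hs : LinearIndependent K fun p : s => A.col p) : IsInfoSet A s := by
  classical
  set M : Matrix s m K := (A.submatrix id Subtype.val)ᵀ
  have hrank : M.rank = Fintype.card s := LinearIndependent.rank_matrix hs
  have hsurj : Function.Surjective M.mulVecLin := by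
    rw [← LinearMap.range_eq_top]
    apply Submodule.eq_top_of_finrank_eq
    rw [← Matrix.rank, hrank, Module.finrank_fintype_fun_eq_card]
  intro w
  obtain ⟨x, hx⟩ := hsurj fun p => w p
  refine ⟨x, fun p hp => ?_⟩
  simpa [M, vecMul, mulVec, dotProduct, mul_comm] using congrFun hx ⟨p, hp⟩

theorem exists_isInfoSet [Fintype n] [DecidableEq m] (A : Matrix m n K) {Y : Matrix n m K}
    (hY : A * Y = 1) :
    ∃ s : Finset n, IsInfoSet A s ∧ s.card = Fintype.card m := by
  classical
  obtain ⟨b, -, -, hspan, hli⟩ :=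
    exists_linearIndepOn_extension (linearIndepOn_empty K A.col) (Set.empty_subset Set.univ)
  rw [← Set.coe_toFinset b] at hspan hli
  set s := b.toFinset
  have hli' : LinearIndependent K fun p : s => A.col p := hli
  refine ⟨s, isInfoSet_of_linearIndependent_col A s hli', le_antisymm ?_ ?_⟩
  · simpa using hli'.fintype_card_le_finrank
  · calc Fintype.card m = (A * Y).rank := by rw [hY, rank_one]
      _ ≤ A.rank := rank_mul_le_left A Y
      _ ≤ Module.finrank K (Submodule.span K (Set.range fun p : s => A.col p)) := by
        rw [rank_eq_finrank_span_cols]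
        refine Submodule.finrank_mono (Submodule.span_le.2 ?_)
        rintro _ ⟨p, rfl⟩
        simpa [Set.image_eq_range] using hspan ⟨p, Set.mem_univ p, rfl⟩
      _ = s.card := by rw [finrank_span_eq_card hli', Fintype.card_coe]

theorem exists_ne_zero_vecMul_eq_zero_on (A : Matrix m n K) {R : Finset m} {s : Finset n}
    (h : s.card < R.card) :
    ∃ c : m → K, c ≠ 0 ∧ (∀ i ∉ R, c i = 0) ∧ ∀ p ∈ s, (c ᵥ* A) p = 0 := by
  classical
  set f : (R → K) →ₗ[K] (s → K) := LinearMap.funLeft K K Subtype.val ∘ₗ A.vecMulLinear ∘ₗ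
    Function.ExtendByZero.linearMap K Subtype.val
  obtain ⟨c, hc, hc0⟩ := (Submodule.ne_bot_iff _).1
    (LinearMap.ker_ne_bot_of_finrank_lt (f := f) (by simpa using h))
  refine ⟨Function.extend Subtype.val c 0, fun h0 => hc0 (funext fun i => ?_),
    fun i hi => Function.extend_apply' _ _ _ fun ⟨a, ha⟩ => hi (ha ▸ a.2),
    fun p hp => congrFun (LinearMap.mem_ker.1 hc) ⟨p, hp⟩⟩
  simpa [Subtype.val_injective.extend_apply] using congrFun h0 i

end FieldMatrix

omit [Fintype ι] in
theorem IsGenMat.row_mem {C : Submodule F[X] (ι → F[X])} {G : Matrix (Fin k) ι F[X]}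
    (hG : IsGenMat C G) (i : Fin k) : G i ∈ C :=
  hG.2 ▸ Submodule.subset_span ⟨i, rfl⟩

omit [Fintype ι] in
theorem IsGenMat.exists_eq_mul {C : Submodule F[X] (ι → F[X])} {G G' : Matrix (Fin k) ι F[X]}
    (hG : IsGenMat C G) (hG' : IsGenMat C G') :
    ∃ P : Matrix (Fin k) (Fin k) F[X], G = P * G' :=
  exists_eq_mul_of_row_mem_span G G' fun i => hG'.2 ▸ hG.row_mem i

/-- Two generator matrices of the same code differ by a unimodular factor. -/
theorem IsGenMat.exists_mul_eq_one {C : Submodule F[X] (ι → F[X])}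
    {G G' : Matrix (Fin k) ι F[X]} (hG : IsGenMat C G) (hG' : IsGenMat C G')
    (h : ∃ Y : Matrix ι (Fin k) F[X], G' * Y = 1) :
    ∃ Y : Matrix ι (Fin k) F[X], G * Y = 1 := by
  obtain ⟨Y, hY⟩ := h
  obtain ⟨P, rfl⟩ := hG.exists_eq_mul hG'
  obtain ⟨Q, hQ⟩ := hG'.exists_eq_mul hG
  have hQP : Q * P = 1 := by
    calc Q * P = Q * P * (G' * Y) := by rw [hY, Matrix.mul_one]
      _ = G' * Y := by rw [← Matrix.mul_assoc, Matrix.mul_assoc Q, ← hQ]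
      _ = 1 := hY
  refine ⟨Y * Q, ?_⟩
  rw [Matrix.mul_assoc, ← Matrix.mul_assoc G', hY, Matrix.one_mul, mul_eq_one_comm.1 hQP]

theorem coeffMat_zero_mul_eq_one {G : Matrix (Fin k) ι F[X]} {Y : Matrix ι (Fin k) F[X]}
    (h : G * Y = 1) : coeffMat G 0 * Y.map constantCoeff = 1 := by
  have hG0 : coeffMat G 0 = G.map constantCoeff := by
    ext i p
    simp [coeffMat, constantCoeff_apply]
  rw [hG0, ← Matrix.map_mul, h, Matrix.map_one _ (map_zero _) (map_one _)]

theorem NonCatastrophic.exists_coeffMat_zero_mul_eq_one {C : Submodule F[X] (ι → F[X])}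
    (hC : NonCatastrophic C k) {G : Matrix (Fin k) ι F[X]} (hG : IsGenMat C G) :
    ∃ Y : Matrix ι (Fin k) F, coeffMat G 0 * Y = 1 := by
  obtain ⟨G', hG'red, -, hG'inv⟩ := hC
  obtain ⟨Y, hY⟩ := hG.exists_mul_eq_one hG'red.1 hG'inv
  exact ⟨_, coeffMat_zero_mul_eq_one hY⟩

theorem natDegree_le_rowDeg (G : Matrix (Fin k) ι F[X]) (i : Fin k) (p : ι) :
    (G i p).natDegree ≤ rowDeg G i :=
  Finset.le_sup (f := fun p => (G i p).natDegree) (mem_univ p)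

theorem vecMul_coeffMat_eq_zero_of_rowDeg_lt {G : Matrix (Fin k) ι F[X]} {R : Finset (Fin k)}
    {c : Fin k → F} (hcR : ∀ i ∉ R, c i = 0) {h : ℕ} (hdeg : ∀ i ∈ R, rowDeg G i < h) (p : ι) :
    (c ᵥ* coeffMat G h) p = 0 := by
  simp only [vecMul, dotProduct]
  refine sum_eq_zero fun i _ => ?_
  by_cases hi : i ∈ R
  · have hlt := (natDegree_le_rowDeg G i p).trans_lt (hdeg i hi)
    simp [coeffMat, coeff_eq_zero_of_natDegree_lt hlt]
  · simp [hcR i hi]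

theorem card_mul_succ_le_sum_add_card_filter {α : Type*} (s : Finset α) (f : α → ℕ) {ν : ℕ}
    (hν : ∀ i ∈ s, ν ≤ f i) : s.card * (ν + 1) ≤ ∑ i ∈ s, f i + (s.filter (f · = ν)).card := by
  rw [card_filter, ← sum_add_distrib, card_eq_sum_ones, sum_mul]
  exact sum_le_sum fun i hi => by
    have := hν i hi
    split_ifs <;> omega

theorem le_div_add_div {a b ν j δ : ℕ} (ha : 0 < a) (hb : 0 < b) (hν : a * ν ≤ δ)
    (hj : b * (j - ν) ≤ δ) : j ≤ δ / a + δ / b := by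
  have h₁ : ν ≤ δ / a := (Nat.le_div_iff_mul_le ha).2 (by rwa [mul_comm])
  have h₂ : j - ν ≤ δ / b := (Nat.le_div_iff_mul_le hb).2 (by rwa [mul_comm])
  omega

section SumRankWeight

variable {Fq : Type*} [Field Fq] {Fqm : Type*} [Field Fqm] [Algebra Fq Fqm] {m g r : ℕ}
  (B : Module.Basis (Fin m) Fq Fqm)

/-- The rank of a block is at most its number of nonzero columns. -/
theorem srWt_le_card_of_support_subset {c : Fin g × Fin r → Fqm} {s : Finset (Fin g × Fin r)}
    (hs : ∀ p, c p ≠ 0 → p ∈ s) : srWt Fq B c ≤ s.card := by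
  classical
  calc srWt Fq B c ≤ ∑ a : Fin g, ((s.filter (·.1 = a)).image Prod.snd).card := by
        refine Finset.sum_le_sum fun a _ => ?_
        rw [← rank_transpose]
        refine rank_le_card_of_support_subset _ _ fun j hj => Finset.mem_image.2
          ⟨(a, j), Finset.mem_filter.2 ⟨hs _ fun hc => hj ?_, rfl⟩, rfl⟩
        ext i
        simp [hc]
    _ ≤ ∑ a : Fin g, (s.filter (·.1 = a)).card := Finset.sum_le_sum fun _ _ => card_image_le
    _ = s.card := (card_eq_sum_card_fiberwise fun p _ => mem_univ p.1).symm

theorem srWtVec_le_card_of_support_subset {j : ℕ} {v : Fin (j + 1) × (Fin g × Fin r) → Fqm}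
    {s : Finset (Fin (j + 1) × (Fin g × Fin r))} (hs : ∀ q, v q ≠ 0 → q ∈ s) :
    srWtVec Fq B v ≤ s.card := by
  classical
  calc srWtVec Fq B v ≤ ∑ h : Fin (j + 1), ((s.filter (·.1 = h)).image Prod.snd).card :=
        Finset.sum_le_sum fun h _ => srWt_le_card_of_support_subset B fun p hp =>
          Finset.mem_image.2 ⟨(h, p), Finset.mem_filter.2 ⟨hs _ hp, rfl⟩, rfl⟩
    _ ≤ ∑ h : Fin (j + 1), (s.filter (·.1 = h)).card := Finset.sum_le_sum fun _ _ => card_image_le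
    _ = s.card := (card_eq_sum_card_fiberwise fun q _ => mem_univ q.1).symm

theorem srWtVec_succ {j : ℕ} (v : Fin (j + 2) × (Fin g × Fin r) → Fqm) :
    srWtVec Fq B v = srWtVec Fq B (fun q : Fin (j + 1) × _ => v (q.1.castSucc, q.2)) +
      srWt Fq B (fun p => v (Fin.last (j + 1), p)) :=
  Fin.sum_univ_castSucc _

end SumRankWeight

section SlidingMatrix

omit [Fintype ι]

variable {j : ℕ} (G : Matrix (Fin k) ι F[X])

theorem vecMul_slidingMat_castSucc (u : Fin (j + 2) × Fin k → F) (h : Fin (j + 1)) (p : ι) :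
    (u ᵥ* slidingMat G (j + 1)) (h.castSucc, p) =
      ((fun q : Fin (j + 1) × Fin k => u (q.1.castSucc, q.2)) ᵥ* slidingMat G j) (h, p) := by
  have hh : ¬ j < (h : ℕ) := by omega
  simp only [vecMul, dotProduct, Fintype.sum_prod_type]
  rw [Fin.sum_univ_castSucc]
  simp [slidingMat, hh]

theorem vecMul_slidingMat_last (u : Fin (j + 2) × Fin k → F) (p : ι) :
    (u ᵥ* slidingMat G (j + 1)) (Fin.last (j + 1), p) =
      ∑ a : Fin (j + 1), ((fun i => u (a.castSucc, i)) ᵥ* coeffMat G (j + 1 - a)) p +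
        ((fun i => u (Fin.last (j + 1), i)) ᵥ* coeffMat G 0) p := by
  simp only [vecMul, dotProduct, Fintype.sum_prod_type]
  rw [Fin.sum_univ_castSucc]
  simp [slidingMat, coeffMat, Nat.le_succ_of_le (Fin.is_le _)]

theorem vecMul_slidingMat_ite_zero (c : Fin k → F) (h : Fin (j + 1)) (p : ι) :
    ((fun q : Fin (j + 1) × Fin k => if q.1 = 0 then c q.2 else 0) ᵥ* slidingMat G j) (h, p) =
      (c ᵥ* coeffMat G h) p := by
  simp only [vecMul, dotProduct, Fintype.sum_prod_type]
  rw [Fintype.sum_eq_single 0 fun a ha => by simp [ha]]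
  simp [slidingMat, coeffMat]

theorem colBlockCode_nonempty (hk : 0 < k) (j : ℕ) :
    (colBlockCode G j).Nonempty :=
  ⟨_, fun _ => 1, fun h => one_ne_zero (congrFun h ⟨0, hk⟩), rfl⟩

variable {G}

/-- The new input `u_{j+1}` enters the last block only through `u_{j+1} G₀`. -/
theorem exists_mem_colBlockCode_succ {s : Finset ι} (hs : IsInfoSet (coeffMat G 0) s)
    {v : Fin (j + 1) × ι → F} (hv : v ∈ colBlockCode G j) :
    ∃ v' ∈ colBlockCode G (j + 1), (∀ q : Fin (j + 1) × ι, v' (q.1.castSucc, q.2) = v q) ∧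
      ∀ p ∈ s, v' (Fin.last (j + 1), p) = 0 := by
  obtain ⟨u, hu0, rfl⟩ := hv
  obtain ⟨x, hx⟩ := hs fun p =>
    -∑ a : Fin (j + 1), ((fun i => u (a, i)) ᵥ* coeffMat G (j + 1 - a)) p
  set u' : Fin (j + 2) × Fin k → F := fun q => Fin.lastCases (x q.2) (fun a => u (a, q.2)) q.1
  refine ⟨u' ᵥ* slidingMat G (j + 1), ⟨u', ?_, rfl⟩, fun q => ?_, fun p hp => ?_⟩
  · refine fun h => hu0 (funext fun i => ?_)
    have h0 := congrFun h i
    rw [show (0 : Fin (j + 2)) = Fin.castSucc 0 from rfl] at h0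
    simpa only [u', Fin.lastCases_castSucc] using h0
  · rw [vecMul_slidingMat_castSucc]
    simp [u']
  · rw [vecMul_slidingMat_last]
    simp [u', hx p hp]

end SlidingMatrix

section ColumnDistance

variable {Fq : Type*} [Field Fq] {Fqm : Type*} [Field Fqm] [Algebra Fq Fqm] {m g r : ℕ}
  (B : Module.Basis (Fin m) Fq Fqm) {G : Matrix (Fin k) (Fin g × Fin r) Fqm[X]}
  {s : Finset (Fin g × Fin r)}

theorem srColDist_zero_le (hs : IsInfoSet (coeffMat G 0) s) (hsne : s.Nonempty) :
    srColDist Fq B G 0 ≤ g * r - s.card + 1 := by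
  classical
  obtain ⟨p₀, hp₀⟩ := hsne
  obtain ⟨c, hc⟩ := hs (Pi.single p₀ 1)
  set u : Fin 1 × Fin k → Fqm := fun q => if q.1 = 0 then c q.2 else 0
  have hv : ∀ q, (u ᵥ* slidingMat G 0) q = (c ᵥ* coeffMat G 0) q.2 := fun q => by
    rw [vecMul_slidingMat_ite_zero, Nat.lt_one_iff.1 q.1.is_lt]
  have hc0 : c ≠ 0 := by
    rintro rfl
    simpa using hc p₀ hp₀
  have hmem : u ᵥ* slidingMat G 0 ∈ colBlockCode G 0 := ⟨u, by simpa [u] using hc0, rfl⟩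
  calc srColDist Fq B G 0 ≤ srWtVec Fq B (u ᵥ* slidingMat G 0) := Nat.sInf_le ⟨_, hmem, rfl⟩
    _ ≤ (univ ×ˢ (sᶜ ∪ {p₀})).card := srWtVec_le_card_of_support_subset B fun q hq => by
        refine mem_product.2 ⟨mem_univ _, ?_⟩
        by_cases hqs : q.2 ∈ s
        · rw [hv, hc q.2 hqs] at hq
          have hq₀ : q.2 = p₀ := by_contra fun hne => hq (Pi.single_eq_of_ne hne 1)
          simp [hq₀]
        · simp [hqs]
    _ ≤ g * r - s.card + 1 := by
        rw [card_product, card_univ, Fintype.card_fin, zero_add, one_mul]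
        refine (card_union_le _ _).trans ?_
        simp [card_compl]

theorem srColDist_succ_le (hk : 0 < k) (hs : IsInfoSet (coeffMat G 0) s) (j : ℕ) :
    srColDist Fq B G (j + 1) ≤ srColDist Fq B G j + (g * r - s.card) := by
  obtain ⟨v, hv, hvd⟩ := Nat.sInf_mem ((colBlockCode_nonempty G hk j).image (srWtVec Fq B))
  obtain ⟨v', hv', hinit, hlast⟩ := exists_mem_colBlockCode_succ hs hv
  calc srColDist Fq B G (j + 1) ≤ srWtVec Fq B v' := Nat.sInf_le ⟨v', hv', rfl⟩
    _ = srWtVec Fq B v + srWt Fq B (fun p => v' (Fin.last (j + 1), p)) := by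
        rw [srWtVec_succ]
        simp only [hinit]
    _ ≤ srColDist Fq B G j + sᶜ.card := by
        rw [← srColDist] at hvd
        rw [hvd]
        exact Nat.add_le_add_left (srWt_le_card_of_support_subset B fun p hp =>
          mem_compl.2 fun hps => hp (hlast p hps)) _
    _ = srColDist Fq B G j + (g * r - s.card) := by simp [card_compl]

theorem srColDist_le (hk : 0 < k) (hs : IsInfoSet (coeffMat G 0) s) (hsk : s.card = k)
    (j : ℕ) : srColDist Fq B G j ≤ (g * r - k) * (j + 1) + 1 := by
  induction j with
  | zero => simpa [hsk] using srColDist_zero_le B hs (card_pos.1 (hsk ▸ hk))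
  | succ j ih =>
    have := srColDist_succ_le B hk hs j
    rw [hsk] at this
    rw [Nat.mul_succ]
    omega

/-- A combination of rows of degree at most `ν` gives a codeword vanishing after time `ν`, and
with `R.card` rows there is room to also kill `R.card - 1` coordinates of the first block. -/
theorem srColDist_add_card_le {R : Finset (Fin k)} (hR : R.Nonempty) (hRN : R.card ≤ g * r + 1)
    {ν j : ℕ} (hdeg : ∀ i ∈ R, rowDeg G i ≤ ν) (hνj : ν ≤ j) :
    srColDist Fq B G j + R.card ≤ (ν + 1) * (g * r) + 1 := by
  classical
  obtain ⟨t, -, ht⟩ := exists_subset_card_eq (s := (univ : Finset (Fin g × Fin r)))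
    (n := R.card - 1) (by simp; omega)
  obtain ⟨c, hc0, hcR, hct⟩ := exists_ne_zero_vecMul_eq_zero_on (coeffMat G 0) (R := R) (s := t)
    (by have := hR.card_pos; omega)
  set u : Fin (j + 1) × Fin k → Fqm := fun q => if q.1 = 0 then c q.2 else 0
  set v := u ᵥ* slidingMat G j
  have hv : ∀ h p, v (h, p) = (c ᵥ* coeffMat G h) p := vecMul_slidingMat_ite_zero G c
  have hmem : v ∈ colBlockCode G j := ⟨u, by simpa [u] using hc0, rfl⟩
  have hvanish : ∀ q : Fin (j + 1) × (Fin g × Fin r), ν < q.1 → v q = 0 := fun q hq =>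
    (hv q.1 q.2).trans
      (vecMul_coeffMat_eq_zero_of_rowDeg_lt hcR (fun i hi => (hdeg i hi).trans_lt hq) q.2)
  set S := (univ \ ({0} ×ˢ t)).image
    fun q : Fin (ν + 1) × (Fin g × Fin r) => (Fin.castLE (Nat.succ_le_succ hνj) q.1, q.2)
  have hsupp : ∀ q, v q ≠ 0 → q ∈ S := by
    rintro ⟨h, p⟩ hq
    have hh : (h : ℕ) < ν + 1 := Nat.lt_succ_of_le (not_lt.1 fun hh => hq (hvanish _ hh))
    refine mem_image.2 ⟨(⟨h, hh⟩, p), mem_sdiff.2 ⟨mem_univ _, fun h0 => hq ?_⟩, rfl⟩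
    obtain ⟨h0, hpt⟩ := mem_product.1 h0
    have h0' : ((⟨h, hh⟩ : Fin (ν + 1)) : ℕ) = 0 := congrArg Fin.val (mem_singleton.1 h0)
    obtain rfl : h = 0 := Fin.ext h0'
    exact (hv 0 p).trans (hct p hpt)
  have hS : S.card ≤ (ν + 1) * (g * r) - (R.card - 1) := by
    refine card_image_le.trans ?_
    rw [card_sdiff_of_subset (subset_univ _), card_univ, card_product, card_singleton, one_mul,
      ht]
    simp
  have hd : srColDist Fq B G j ≤ (ν + 1) * (g * r) - (R.card - 1) :=
    (Nat.sInf_le (Set.mem_image_of_mem _ hmem)).trans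
      ((srWtVec_le_card_of_support_subset B hsupp).trans hS)
  have : g * r ≤ (ν + 1) * (g * r) := Nat.le_mul_of_pos_left _ ν.succ_pos
  have := hR.card_pos
  omega

theorem le_div_add_div_of_srColDist_eq (hk : 0 < k) (hkN : k < g * r) {δ : ℕ}
    (hδ : ∑ i, rowDeg G i = δ) {j : ℕ} (hj : srColDist Fq B G j = (g * r - k) * (j + 1) + 1) :
    j ≤ δ / k + δ / (g * r - k) := by
  classical
  obtain ⟨i₀, -, hmin⟩ := exists_min_image univ (rowDeg G) (univ_nonempty_iff.2 ⟨⟨0, hk⟩⟩)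
  set ν := rowDeg G i₀
  set R := univ.filter (rowDeg G · = ν)
  have hcount : k * (ν + 1) ≤ δ + R.card := by
    simpa [hδ, mul_comm] using
      card_mul_succ_le_sum_add_card_filter univ (rowDeg G) fun i _ => hmin i (mem_univ i)
  have hRk : R.card ≤ k := (card_filter_le _ _).trans (by simp)
  refine le_div_add_div (ν := ν) hk (by omega) (by rw [Nat.mul_succ] at hcount; omega) ?_
  rcases le_total j ν with hjν | hνj
  · simp [Nat.sub_eq_zero_of_le hjν]
  · have hR := srColDist_add_card_le B (R := R) ⟨i₀, mem_filter.2 ⟨mem_univ _, rfl⟩⟩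
      (by omega) (fun i hi => (mem_filter.1 hi).2.le) hνj
    rw [hj] at hR
    have e₁ : (ν + 1) * (g * r) = (g * r - k) * (ν + 1) + k * (ν + 1) := by
      rw [← Nat.add_mul, Nat.sub_add_cancel hkN.le, mul_comm]
    have e₂ : (g * r - k) * (j + 1) = (g * r - k) * (j - ν) + (g * r - k) * (ν + 1) := by
      rw [← Nat.mul_add]
      congr 1
      omega
    omega

end ColumnDistance

theorem statement3_general {Fq : Type*} [Field Fq]
    {Fqm : Type*} [Field Fqm] [Algebra Fq Fqm]
    {m g r k N δ : ℕ}
    (hN : N = g * r) (hk1 : 1 ≤ k) (hkN : k < N)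
    (B : Module.Basis (Fin m) Fq Fqm)
    (C : Submodule (Polynomial Fqm) (Fin g × Fin r → Polynomial Fqm))
    (hnc : NonCatastrophic C k)
    (G : Matrix (Fin k) (Fin g × Fin r) (Polynomial Fqm))
    (hG : IsRedGenMat C G)
    (hδ : ∑ i, rowDeg G i = δ) :
    (∀ j : ℕ, srColDist Fq B G j ≤ (N - k) * (j + 1) + 1) ∧
    (∀ j : ℕ, srColDist Fq B G (j + 1) = (N - k) * (j + 2) + 1 →
        srColDist Fq B G j = (N - k) * (j + 1) + 1) ∧
    (∀ j : ℕ, srColDist Fq B G j = (N - k) * (j + 1) + 1 →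
        j ≤ δ / k + δ / (N - k)) := by
  subst hN
  obtain ⟨Y, hY⟩ := hnc.exists_coeffMat_zero_mul_eq_one hG.1
  obtain ⟨s, hs, hsk⟩ := exists_isInfoSet (coeffMat G 0) hY
  rw [Fintype.card_fin] at hsk
  refine ⟨srColDist_le B hk1 hs hsk, fun j hj => ?_,
    fun j hj => le_div_add_div_of_srColDist_eq B hk1 hkN hδ hj⟩
  have hsucc := srColDist_succ_le B hk1 hs j
  have hle := srColDist_le B hk1 hs hsk j
  rw [hsk, hj, Nat.mul_succ] at hsucc
  omega

theorem statement3 {Fq : Type*} [Field Fq] [Fintype Fq]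
    {Fqm : Type*} [Field Fqm] [Algebra Fq Fqm]
    {m g r k N δ : ℕ} (hm : 0 < m) (hg : 0 < g) (hr : 0 < r)
    (hN : N = g * r) (hk1 : 1 ≤ k) (hkN : k < N)
    (B : Module.Basis (Fin m) Fq Fqm)
    (C : Submodule (Polynomial Fqm) (Fin g × Fin r → Polynomial Fqm))
    (hnc : NonCatastrophic C k)
    (G : Matrix (Fin k) (Fin g × Fin r) (Polynomial Fqm))
    (hG : IsRedGenMat C G)
    (hδ : ∑ i, rowDeg G i = δ) :
    (∀ j : ℕ, srColDist Fq B G j ≤ (N - k) * (j + 1) + 1) ∧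
    (∀ j : ℕ, srColDist Fq B G (j + 1) = (N - k) * (j + 2) + 1 →
        srColDist Fq B G j = (N - k) * (j + 1) + 1) ∧
    (∀ j : ℕ, srColDist Fq B G j = (N - k) * (j + 1) + 1 →
        j ≤ δ / k + δ / (N - k)) :=
  statement3_general hN hk1 hkN B C hnc G hG hδ

end LRCC
end
end

section
/- In Construction 1, if the outer code C_out ⊆ F_{q^m}[D]^N is non-catastrophic, then the global code C_glob ⊆ F_{q^m}[D]^n is non-catastrophic, and moreover for any Δ = Δ_1 ∪ Δ_2 ∪ ... ∪ Δ_g ⊆ {1,...,n} with Δ_i ⊆ Γ_i and |Δ_i| ≥ r for i = 1,...,g (where Γ_i = {(r+∂−1)(i−1)+1, ..., (r+∂−1)i}), the restricted code (C_glob)_Δ is non-catastrophic. -/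
open Polynomial Matrix Finset

noncomputable section

namespace LRCC

variable {F : Type*} [Field F] {ι : Type*} [Fintype ι] {k : ℕ}

/-! `C_glob` is the image of `C_out` under the constant matrix `diag_g(A)`, and its
restriction to `Δ` is the image under the `Δ`-columns of `diag_g(A)`. These columns have
injective `vecMul` (for `C_glob` itself take `Δ_a = Γ_a`), hence a constant right inverse: a
nonzero combination of the rows of `A` is a codeword of weight at least `∂`, so it cannot
vanish on `Δ_a`, which misses at most `∂ - 1` positions of `Γ_a`. Right multiplication by a
constant `M` with constant right inverse `N` does not raise row degrees, and `G ↦ G * M`,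
`G' ↦ G' * N` match the generator matrices of `C` and of `C * M`, so it carries reduced basic
generator matrices to reduced basic ones. -/

open scoped Kronecker

section ConstantMatrix

theorem restrictCode_map_vecMulLinear {J : Type*} (C : Submodule F[X] (ι → F[X]))
    (M : Matrix ι J F[X]) (Δ : Finset J) :
    restrictCode (C.map M.vecMulLinear) Δ = C.map (M.submatrix id Subtype.val).vecMulLinear := by
  rw [restrictCode, ← Submodule.map_comp]
  rfl

theorem injective_vecMul_of_injective_vecMul_submatrix {R : Type*} [Semiring R]
    {κ J J' : Type*} [Fintype κ] {M : Matrix κ J R} {e : J' → J}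
    (hM : Function.Injective (M.submatrix id e).vecMul) : Function.Injective M.vecMul :=
  fun _ _ huv => hM (congrArg (· ∘ e) huv)

variable {J : Type*} [Fintype J]

theorem exists_mul_eq_one_of_injective_vecMul {K : Type*} [Field K] [DecidableEq ι]
    {M : Matrix ι J K} (hM : Function.Injective M.vecMul) : ∃ N : Matrix J ι K, M * N = 1 := by
  classical
  obtain ⟨L, hL⟩ := M.vecMulLinear.exists_leftInverse_of_injective
    (LinearMap.ker_eq_bot.mpr hM)
  refine ⟨Matrix.toLinearMapRight'.symm L, Matrix.toLinearMapRight'.injective ?_⟩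
  rw [Matrix.toLinearMapRight'_mul, LinearEquiv.apply_symm_apply, Matrix.toLinearMapRight'_one]
  exact hL

theorem rowDeg_mul_le_of_natDegree_eq_zero (P : Matrix (Fin k) ι F[X]) {Q : Matrix ι J F[X]}
    (hQ : ∀ i j, (Q i j).natDegree = 0) (i : Fin k) : rowDeg (P * Q) i ≤ rowDeg P i := by
  refine Finset.sup_le fun j _ => natDegree_sum_le_of_forall_le _ _ fun l _ => ?_
  calc (P i l * Q l j).natDegree ≤ (P i l).natDegree + (Q l j).natDegree := natDegree_mul_le
    _ = (P i l).natDegree := by rw [hQ, add_zero]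
    _ ≤ rowDeg P i := Finset.le_sup (f := fun j => (P i j).natDegree) (Finset.mem_univ l)

variable [DecidableEq ι] {C : Submodule F[X] (ι → F[X])} {M : Matrix ι J F[X]}
  {N : Matrix J ι F[X]}

theorem injective_vecMul_of_mul_eq_one (hMN : M * N = 1) : Function.Injective M.vecMul :=
  fun u v huv => by simpa [Matrix.vecMul_vecMul, hMN] using congrArg (· ᵥ* N) huv

theorem isGenMat_map_vecMulLinear_mul_iff (hMN : M * N = 1) (G : Matrix (Fin k) ι F[X]) :
    IsGenMat (C.map M.vecMulLinear) (G * M) ↔ IsGenMat C G := by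
  have hinj := injective_vecMul_of_mul_eq_one hMN
  have hrows : (fun i => (G * M) i) = M.vecMulLinear ∘ fun i => G i := rfl
  rw [IsGenMat, IsGenMat, hrows, Set.range_comp, ← Submodule.map_span,
    (Submodule.map_injective_of_injective hinj).eq_iff,
    LinearMap.linearIndependent_iff _ (LinearMap.ker_eq_bot.mpr hinj)]

theorem mul_mul_eq_of_isGenMat_map_vecMulLinear (hMN : M * N = 1)
    {G : Matrix (Fin k) J F[X]} (hG : IsGenMat (C.map M.vecMulLinear) G) : G * N * M = G := by
  funext i
  obtain ⟨v, -, hv⟩ : G i ∈ C.map M.vecMulLinear := hG.2 ▸ Submodule.subset_span ⟨i, rfl⟩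
  change v ᵥ* M = G i at hv
  rw [Matrix.mul_assoc, Matrix.mul_apply_eq_vecMul, ← hv, Matrix.vecMul_vecMul,
    ← Matrix.mul_assoc, hMN, Matrix.one_mul]

theorem NonCatastrophic.map_vecMulLinear (hMN : M * N = 1)
    (hM : ∀ i j, (M i j).natDegree = 0) (hN : ∀ j i, (N j i).natDegree = 0)
    (hC : NonCatastrophic C k) : NonCatastrophic (C.map M.vecMulLinear) k := by
  obtain ⟨G, ⟨hG, hGmin⟩, -, Fi, hFi⟩ := hC
  have hGM : IsGenMat (C.map M.vecMulLinear) (G * M) :=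
    (isGenMat_map_vecMulLinear_mul_iff hMN G).mpr hG
  refine ⟨G * M, ⟨hGM, fun G' hG' => ?_⟩, hGM, N * Fi, ?_⟩
  · have hG'N : IsGenMat C (G' * N) := by
      rw [← isGenMat_map_vecMulLinear_mul_iff hMN, mul_mul_eq_of_isGenMat_map_vecMulLinear hMN hG']
      exact hG'
    calc ∑ i, rowDeg (G * M) i ≤ ∑ i, rowDeg G i :=
          Finset.sum_le_sum fun i _ => rowDeg_mul_le_of_natDegree_eq_zero G hM i
      _ ≤ ∑ i, rowDeg (G' * N) i := hGmin _ hG'N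
      _ ≤ ∑ i, rowDeg G' i :=
          Finset.sum_le_sum fun i _ => rowDeg_mul_le_of_natDegree_eq_zero G' hN i
  · rw [Matrix.mul_assoc, ← Matrix.mul_assoc M, hMN, Matrix.one_mul, hFi]

theorem NonCatastrophic.map_vecMulLinear_of_injective {K : Type*} [Field K] [Algebra K F]
    {M : Matrix ι J K} (hM : Function.Injective M.vecMul) (hC : NonCatastrophic C k) :
    NonCatastrophic (C.map (M.map (algebraMap K F[X])).vecMulLinear) k := by
  obtain ⟨N, hMN⟩ := exists_mul_eq_one_of_injective_vecMul hM
  have hconst : ∀ x : K, (algebraMap K F[X] x).natDegree = 0 := fun x => by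
    rw [Polynomial.algebraMap_apply, natDegree_C]
  refine hC.map_vecMulLinear (N := N.map (algebraMap K F[X])) ?_ (fun _ _ => hconst _)
    (fun _ _ => hconst _)
  rw [← Matrix.map_mul, hMN, Matrix.map_one _ (map_zero _) (map_one _)]

end ConstantMatrix

section BlockDiagonal

variable {R : Type*} [Ring R] {κ : Type*} [Fintype κ]

theorem hWt_le_card_compl [DecidableEq ι] {β : Type*} [Zero β] {v : ι → β} {Δ : Finset ι}
    (hv : ∀ j ∈ Δ, v j = 0) : hWt v ≤ Δᶜ.card := by
  rw [hWt, ← Nat.card_eq_finsetCard]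
  exact Nat.card_le_card_of_injective
    (fun j => ⟨j.1, Finset.mem_compl.mpr fun hj => j.2 (hv _ hj)⟩)
    fun x y hxy => Subtype.ext (by simpa using hxy)

theorem injective_vecMul_submatrix_of_le_hWt [DecidableEq ι] {A : Matrix κ ι R} {d : ℕ}
    (hA : ∀ u : κ → R, u ≠ 0 → d ≤ hWt (u ᵥ* A)) {Δ : Finset ι} (hΔ : Δᶜ.card < d) :
    Function.Injective (A.submatrix id ((↑) : Δ → ι)).vecMul := by
  intro u v huv
  by_contra hne
  have hvanish : ∀ j ∈ Δ, ((u - v) ᵥ* A) j = 0 := fun j hj => by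
    have huvj : (u ᵥ* A) j = (v ᵥ* A) j := congrFun huv ⟨j, hj⟩
    rw [Matrix.sub_vecMul, Pi.sub_apply, huvj, sub_self]
  exact absurd ((hA _ (sub_ne_zero.mpr hne)).trans (hWt_le_card_compl hvanish)) hΔ.not_ge

variable {ι' : Type*} [Fintype ι'] [DecidableEq ι']

theorem vecMul_one_kronecker_apply {ν : Type*} (u : ι' × κ → R) (A : Matrix κ ν R) (a : ι')
    (j : ν) :
    (u ᵥ* ((1 : Matrix ι' ι' R) ⊗ₖ A)) (a, j) = ((fun i => u (a, i)) ᵥ* A) j := by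
  simp [Matrix.vecMul, dotProduct, Fintype.sum_prod_type, Matrix.one_apply]

theorem injective_vecMul_one_kronecker_submatrix [DecidableEq ι] {A : Matrix κ ι R}
    {Δ : ι' → Finset ι} (hA : ∀ a, Function.Injective (A.submatrix id ((↑) : Δ a → ι)).vecMul) :
    Function.Injective (((1 : Matrix ι' ι' R) ⊗ₖ A).submatrix id
      ((↑) : (Finset.univ.filter fun p : ι' × ι => p.2 ∈ Δ p.1) → ι' × ι)).vecMul := by
  intro u v huv
  funext ⟨a, i⟩
  suffices hblock : (fun i => u (a, i)) = fun i => v (a, i) from congrFun hblock i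
  refine hA a (funext fun ⟨j, hj⟩ => ?_)
  have huvj : (u ᵥ* ((1 : Matrix ι' ι' R) ⊗ₖ A)) (a, j) =
      (v ᵥ* ((1 : Matrix ι' ι' R) ⊗ₖ A)) (a, j) := congrFun huv ⟨(a, j), by simpa using hj⟩
  rwa [vecMul_one_kronecker_apply, vecMul_one_kronecker_apply] at huvj

end BlockDiagonal

theorem diagMap_eq_map_one_kronecker (Fq : Type*) [Field Fq] {Fqm : Type*} [Field Fqm]
    [Algebra Fq Fqm] (g : ℕ) {r s : ℕ} (A : Matrix (Fin r) (Fin s) Fq) :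
    diagMap (Fqm := Fqm) Fq g A =
      ((1 : Matrix (Fin g) (Fin g) Fq) ⊗ₖ A).map (algebraMap Fq Fqm[X]) := by
  ext p q : 1
  by_cases h : p.1 = q.1 <;> simp [diagMap, Matrix.one_apply, h]

theorem statement4_general {Fq : Type*} [Field Fq]
    {Fqm : Type*} [Field Fqm] [Algebra Fq Fqm]
    {g r d k : ℕ} (hd : 0 < d)
    (Cout : Submodule (Polynomial Fqm) (Fin g × Fin r → Polynomial Fqm))
    (A : Matrix (Fin r) (Fin (r + d - 1)) Fq)
    (hA2 : ∀ u : Fin r → Fq, u ≠ 0 → d ≤ hWt (Matrix.vecMul u A))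
    (hnc : NonCatastrophic Cout k) :
    NonCatastrophic (globCode Fq Cout A) k ∧
    ∀ Δ : Fin g → Finset (Fin (r + d - 1)), (∀ a, r ≤ (Δ a).card) →
      NonCatastrophic
        (restrictCode (globCode Fq Cout A)
          (Finset.univ.filter fun p : Fin g × Fin (r + d - 1) => p.2 ∈ Δ p.1)) k := by
  have hrestrict (Δ : Fin g → Finset (Fin (r + d - 1))) (hΔ : ∀ a, r ≤ (Δ a).card) :=
    injective_vecMul_one_kronecker_submatrix (ι' := Fin g) fun a =>
      injective_vecMul_submatrix_of_le_hWt hA2 (Δ := Δ a) (by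
        have := hΔ a
        rw [Finset.card_compl, Fintype.card_fin]
        omega)
  rw [globCode, diagMap_eq_map_one_kronecker]
  refine ⟨hnc.map_vecMulLinear_of_injective ?_, fun Δ hΔ => ?_⟩
  · exact injective_vecMul_of_injective_vecMul_submatrix
      (hrestrict (fun _ => Finset.univ) fun _ => by rw [Finset.card_univ, Fintype.card_fin]; omega)
  · rw [restrictCode_map_vecMulLinear, Matrix.submatrix_map]
    exact hnc.map_vecMulLinear_of_injective (hrestrict Δ hΔ)

theorem statement4 {Fq : Type*} [Field Fq] [Fintype Fq]
    {Fqm : Type*} [Field Fqm] [Algebra Fq Fqm]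
    {g r d k : ℕ} (hg : 0 < g) (hr : 0 < r) (hd : 0 < d)
    (hq : r + d - 1 ≤ Fintype.card Fq)
    (Cout : Submodule (Polynomial Fqm) (Fin g × Fin r → Polynomial Fqm))
    (hout : IsConvCode Cout k)
    (A : Matrix (Fin r) (Fin (r + d - 1)) Fq)
    (hA1 : LinearIndependent Fq (fun i => A i))
    (hA2 : ∀ u : Fin r → Fq, u ≠ 0 → d ≤ hWt (Matrix.vecMul u A))
    (hnc : NonCatastrophic Cout k) :
    NonCatastrophic (globCode Fq Cout A) k ∧
    ∀ Δ : Fin g → Finset (Fin (r + d - 1)), (∀ a, r ≤ (Δ a).card) →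
      NonCatastrophic
        (restrictCode (globCode Fq Cout A)
          (Finset.univ.filter fun p : Fin g × Fin (r + d - 1) => p.2 ∈ Δ p.1)) k :=
  statement4_general hd Cout A hA2 hnc

end LRCC
end
end

section
/- Let C ⊆ F[D]^n be an (n,k,r,∂) locally repairable convolutional code with local groups Γ_1,...,Γ_g. Let Δ_i ⊆ Γ_i be subsets with |Γ_i \ Δ_i| ≤ ∂−1 for i = 1,...,g, and set Δ = Δ_1 ∪ ... ∪ Δ_g and N = |Δ|. Then the restricted code C_Δ ⊆ F[D]^N is a free F[D]-submodule of rank k, i.e., an (N,k) convolutional code. Moreover, if G(D) = Σ_{j=0}^{μ} G_j D^j is a reduced generator matrix of C such that G_0 ∈ F^{k×n} has rank k, then the restricted matrix (G_0)_Δ ∈ F^{k×N} also has rank k. -/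
open Polynomial Matrix Finset

noncomputable section

/-! A coefficient vector of a codeword that vanishes on `Δ` restricts, on each local group
`Γ a`, to a word of the local block code supported in `Γ a \ Δ a`, hence of weight below `∂`;
so it is zero. Restriction to `Δ` is therefore injective on `C` and on the row space of `G_0`,
and injective linear maps preserve generator matrices and ranks. -/

namespace LRCC

variable {F : Type*} [Field F] {ι : Type*}

theorem hWt_restrict_le_card_sdiff {β : Type*} [Zero β] [DecidableEq ι] {v : ι → β}
    {s u : Finset ι} (hv : ∀ x ∈ u, v x = 0) :
    hWt (fun x : s => v x) ≤ (s \ u).card := by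
  rw [hWt, ← Nat.card_eq_finsetCard]
  refine Nat.card_le_card_of_injective
    (fun y => ⟨y.1.1, mem_sdiff.2 ⟨y.1.2, fun hu => y.2 (hv _ hu)⟩⟩) ?_
  rintro ⟨⟨x, _⟩, _⟩ ⟨⟨y, _⟩, _⟩ h
  cases h
  rfl

theorem hWt_pos {α β : Type*} [Zero β] [Finite α] {v : α → β} (hv : v ≠ 0) :
    0 < hWt v := by
  obtain ⟨a, ha⟩ := Function.ne_iff.1 hv
  have : Nonempty {a // v a ≠ 0} := ⟨⟨a, ha⟩⟩
  exact Nat.card_pos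

/-- The `j`-th coefficient vectors `v_j` of the codewords `v(D) = Σ v_j D^j` of `C`. -/
def coeffCode (C : Submodule F[X] (ι → F[X])) (j : ℕ) : Submodule F (ι → F) :=
  (C.restrictScalars F).map (LinearMap.compLeft (lcoeff F j) ι)

theorem restrict_mem_assocBlockCode {C : Submodule F[X] (ι → F[X])} {j : ℕ} {w : ι → F}
    (hw : w ∈ coeffCode C j) (Γ : Finset ι) :
    (fun x : Γ => w x) ∈ assocBlockCode (restrictCode C Γ) := by
  obtain ⟨v, hv, rfl⟩ := hw
  exact ⟨fun x => v x, ⟨v, hv, rfl⟩, j, fun _ => rfl⟩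

theorem span_coeffMat_le_coeffCode {k : ℕ} {C : Submodule F[X] (ι → F[X])}
    {G : Matrix (Fin k) ι F[X]} (hG : IsGenMat C G) (j : ℕ) :
    Submodule.span F (Set.range (coeffMat G j).row) ≤ coeffCode C j := by
  refine Submodule.span_le.2 ?_
  rintro _ ⟨i, rfl⟩
  exact ⟨G i, hG.2 ▸ Submodule.subset_span ⟨i, rfl⟩, rfl⟩

theorem IsGenMat.restrict [Fintype ι] {k : ℕ} {C : Submodule F[X] (ι → F[X])}
    {G : Matrix (Fin k) ι F[X]} (hG : IsGenMat C G) {Δ : Finset ι}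
    (hΔ : Disjoint C (LinearMap.ker (LinearMap.funLeft F[X] F[X] (Subtype.val : Δ → ι)))) :
    IsGenMat (restrictCode C Δ) (Matrix.of fun i (x : Δ) => G i x) := by
  obtain ⟨hli, rfl⟩ := hG
  have hrows : (fun i => Matrix.of (fun i (x : Δ) => G i x) i) =
      LinearMap.funLeft F[X] F[X] Subtype.val ∘ fun i => G i := rfl
  rw [IsGenMat, hrows]
  exact ⟨hli.map hΔ, by rw [restrictCode, Submodule.map_span, Set.range_comp]⟩

theorem rank_submatrix_cols_eq_card [Fintype ι] {m κ : Type*} [Fintype m] [Fintype κ]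
    (M : Matrix m ι F) {s : κ → ι} (hM : M.rank = Fintype.card m)
    (hs : Disjoint (Submodule.span F (Set.range M.row))
      (LinearMap.ker (LinearMap.funLeft F F s))) :
    (Matrix.of fun i x => M i (s x)).rank = Fintype.card m := by
  have hrows : LinearIndependent F M.row := linearIndependent_iff_card_eq_finrank_span.2 <| by
    rw [Set.finrank, ← M.rank_eq_finrank_span_row, hM]
  exact (hrows.map hs).rank_matrix

section LocalRepair

variable [Fintype ι] [DecidableEq ι] {C : Submodule F[X] (ι → F[X])} {k r d g : ℕ}
  {Γ Δ : Fin g → Finset ι}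

theorem IsLRCC.disjoint_coeffCode_ker_restrict (hC : IsLRCC C k r d Γ)
    (hcard : ∀ a, (Γ a \ Δ a).card ≤ d - 1) (j : ℕ) :
    Disjoint (coeffCode C j)
      (LinearMap.ker (LinearMap.funLeft F F (Subtype.val : univ.biUnion Δ → ι))) := by
  refine Submodule.disjoint_def.2 fun w hw hker => funext fun x => ?_
  have hΔ : ∀ y ∈ univ.biUnion Δ, w y = 0 := fun y hy => congrFun hker ⟨y, hy⟩
  obtain ⟨a, hxa⟩ := hC.2.1 x
  suffices hwa : (fun y : Γ a => w y) = 0 from congrFun hwa ⟨x, hxa⟩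
  by_contra hne
  have hlow : d ≤ hWt fun y : Γ a => w y :=
    hC.2.2.2 a _ (restrict_mem_assocBlockCode hw (Γ a)) hne
  have hup : hWt (fun y : Γ a => w y) ≤ (Γ a \ Δ a).card :=
    hWt_restrict_le_card_sdiff fun y hy => hΔ y (mem_biUnion.2 ⟨a, mem_univ a, hy⟩)
  have := hWt_pos hne
  have := hcard a
  omega

theorem IsLRCC.disjoint_ker_restrict (hC : IsLRCC C k r d Γ)
    (hcard : ∀ a, (Γ a \ Δ a).card ≤ d - 1) :
    Disjoint C
      (LinearMap.ker (LinearMap.funLeft F[X] F[X] (Subtype.val : univ.biUnion Δ → ι))) := by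
  refine Submodule.disjoint_def.2 fun v hv hker => funext fun x => Polynomial.ext fun j => ?_
  have hcoeff := Submodule.disjoint_def.1 (hC.disjoint_coeffCode_ker_restrict hcard j)
    (fun y => (v y).coeff j) ⟨v, hv, rfl⟩
    (funext fun y => by simp [show v y = 0 from congrFun hker y])
  exact congrFun hcoeff x

end LocalRepair

theorem statement8_general {F : Type*} [Field F]
    {n k r d g : ℕ}
    (C : Submodule (Polynomial F) (Fin n → Polynomial F))
    (Γ : Fin g → Finset (Fin n)) (hC : IsLRCC C k r d Γ)
    (Δ : Fin g → Finset (Fin n))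
    (hcard : ∀ a, (Γ a \ Δ a).card ≤ d - 1) :
    IsConvCode (restrictCode C (Finset.univ.biUnion Δ)) k ∧
    ∀ G : Matrix (Fin k) (Fin n) (Polynomial F),
      IsRedGenMat C G → (coeffMat G 0).rank = k →
        (Matrix.of fun i (x : {x // x ∈ Finset.univ.biUnion Δ}) =>
          coeffMat G 0 i x.1).rank = k := by
  refine ⟨?_, fun G hG hrank => ?_⟩
  · obtain ⟨G, hG⟩ := hC.1
    exact ⟨_, hG.restrict (hC.disjoint_ker_restrict hcard)⟩
  · have hΔ := (hC.disjoint_coeffCode_ker_restrict hcard 0).mono_left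
      (span_coeffMat_le_coeffCode hG.1 0)
    convert (rank_submatrix_cols_eq_card _ (hrank.trans (Fintype.card_fin k).symm) hΔ).trans
      (Fintype.card_fin k)

theorem statement8 {F : Type*} [Field F] [Fintype F]
    {n k r d g : ℕ}
    (C : Submodule (Polynomial F) (Fin n → Polynomial F))
    (Γ : Fin g → Finset (Fin n)) (hC : IsLRCC C k r d Γ)
    (Δ : Fin g → Finset (Fin n)) (hsub : ∀ a, Δ a ⊆ Γ a)
    (hcard : ∀ a, (Γ a \ Δ a).card ≤ d - 1) :
    IsConvCode (restrictCode C (Finset.univ.biUnion Δ)) k ∧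
    ∀ G : Matrix (Fin k) (Fin n) (Polynomial F),
      IsRedGenMat C G → (coeffMat G 0).rank = k →
        (Matrix.of fun i (x : {x // x ∈ Finset.univ.biUnion Δ}) =>
          coeffMat G 0 i x.1).rank = k :=
  statement8_general C Γ hC Δ hcard

end LRCC
end
end
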